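/- Let A and B be finite abelian groups, μ a linking form on A and ν a linking form on B. Suppose A = A₀ ⊕ A₁ is an internal direct sum of subgroups (A₀ ∩ A₁ = {0} and A₀ + A₁ = A) with μ(x,y) = 0 for all x,y ∈ A₀, and let L be a subgroup of A × B on which μ ⊕ ν vanishes (i.e. (μ ⊕ ν)(u,v) = 0 for all u,v ∈ L). Let π₁ : A → A₁ denote the projection along A₀, and set L_{A₁} = {π₁(a) : a ∈ A and (a,b) ∈ L for some b ∈ B}. Then |{u ∈ A₀ : (u, 0) ∈ L}| · |A₀| · |L_{A₁}| ≤ |A|. -/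

import Mathlib

/-!
Put `S = {u ∈ A₀ | (u, 0) ∈ L}` and `S^⊥ = {x ∈ A₁ | μ S x = 0}`. As `A₀` is isotropic and
`A = A₀ + A₁`, nondegeneracy makes every nonzero `s ∈ S` pair nontrivially with `A₁`, so
`s ↦ μ s ·` embeds `S` into the `ℚ/ℤ`-characters of `A₁ / S^⊥`. A finite group has at most as many
such characters as elements (embed `ℚ/ℤ` in the unit circle), whence `|S| · |S^⊥| ≤ |A₁|`.
Isotropy of `L` puts `L_{A₁}` inside `S^⊥`, and `|A₀| · |A₁| ≤ |A|` since `A₀ ∩ A₁ = 0`.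
-/

/-- A linking form on a (finite) abelian group `G`: a `ℚ/ℤ`-valued pairing that is
additive in each variable, symmetric, and nondegenerate. -/
def IsLinkingForm {G : Type*} [AddCommGroup G] (l : G → G → AddCircle (1 : ℚ)) : Prop :=
  (∀ x y z : G, l (x + y) z = l x z + l y z) ∧
  (∀ x y z : G, l x (y + z) = l x y + l x z) ∧
  (∀ x y : G, l x y = l y x) ∧
  (∀ x : G, x ≠ 0 → ∃ y : G, l x y ≠ 0)

open Function

noncomputable def AddCircle.ratToReal : AddCircle (1 : ℚ) →+ AddCircle (1 : ℝ) :=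
  QuotientAddGroup.map _ _ (Rat.castHom ℝ).toAddMonoidHom <| by
    rintro _ ⟨n, rfl⟩
    exact ⟨n, by simp⟩

theorem AddCircle.ratToReal_injective : Injective AddCircle.ratToReal := by
  refine (injective_iff_map_eq_zero _).2 fun x ↦ QuotientAddGroup.induction_on x fun q hq ↦ ?_
  obtain ⟨n, hn⟩ := (QuotientAddGroup.eq_zero_iff _).1 hq
  refine (QuotientAddGroup.eq_zero_iff q).2 ⟨n, ?_⟩
  simp only [zsmul_eq_mul, mul_one, RingHom.toAddMonoidHom_eq_coe, AddMonoidHom.coe_coe,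
    Rat.coe_castHom] at hn ⊢
  exact_mod_cast hn

noncomputable def AddCircle.ratToCircle : AddChar (AddCircle (1 : ℚ)) Circle :=
  AddCircle.toCircle_addChar.compAddMonoidHom AddCircle.ratToReal

theorem AddCircle.ratToCircle_injective : Injective AddCircle.ratToCircle :=
  (AddCircle.injective_toCircle one_ne_zero).comp AddCircle.ratToReal_injective

section CharacterGroup

variable (G : Type*) [AddCommGroup G] [Finite G]

instance : Finite (AddChar G Circle) :=
  .of_equiv _ AddChar.circleEquivComplex.toEquiv.symm

instance : Finite (G →+ AddCircle (1 : ℚ)) :=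
  .of_injective _ (AddChar.compAddMonoidHom_injective_right _ AddCircle.ratToCircle_injective)

theorem card_addMonoidHom_addCircle_le : Nat.card (G →+ AddCircle (1 : ℚ)) ≤ Nat.card G := by
  cases nonempty_fintype G
  calc Nat.card (G →+ AddCircle (1 : ℚ)) ≤ Nat.card (AddChar G Circle) :=
        Nat.card_le_card_of_injective _
          (AddChar.compAddMonoidHom_injective_right _ AddCircle.ratToCircle_injective)
    _ = Nat.card (AddChar G ℂ) := Nat.card_congr AddChar.circleEquivComplex.toEquiv
    _ = Nat.card G := by simp only [Nat.card_eq_fintype_card, AddChar.card_eq]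

end CharacterGroup

theorem card_mul_card_ker_flip_le {P Q : Type*} [AddCommGroup P] [AddCommGroup Q] [Finite Q]
    (f : P →+ Q →+ AddCircle (1 : ℚ)) (hf : Injective f) :
    Nat.card P * Nat.card f.flip.ker ≤ Nat.card Q := by
  set K := f.flip.ker
  have hK (p : P) : K ≤ (f p).ker := fun q hq ↦ DFunLike.congr_fun hq p
  have hlift : Injective fun p ↦ QuotientAddGroup.lift K (f p) (hK p) := fun p p' h ↦ hf <| by
    ext q
    exact DFunLike.congr_fun h (q : Q ⧸ K)
  calc Nat.card P * Nat.card K ≤ Nat.card (Q ⧸ K →+ AddCircle (1 : ℚ)) * Nat.card K := by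
        gcongr
        exact Nat.card_le_card_of_injective _ hlift
    _ ≤ Nat.card (Q ⧸ K) * Nat.card K := by
        gcongr
        exact card_addMonoidHom_addCircle_le _
    _ = Nat.card Q := (AddSubgroup.card_eq_card_quotient_mul_card_addSubgroup K).symm

theorem AddSubgroup.card_mul_card_le_of_disjoint {G : Type*} [AddGroup G] [Finite G]
    {H K : AddSubgroup G} (h : Disjoint H K) : Nat.card H * Nat.card K ≤ Nat.card G := by
  rw [← Nat.card_prod]
  exact Nat.card_le_card_of_injective _ (AddSubgroup.add_injective_of_disjoint h)

namespace IsLinkingForm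

variable {G : Type*} [AddCommGroup G] {μ : G → G → AddCircle (1 : ℚ)}

def toAddMonoidHom (hμ : IsLinkingForm μ) : G →+ G →+ AddCircle (1 : ℚ) :=
  AddMonoidHom.mk' (fun x ↦ AddMonoidHom.mk' (μ x) (hμ.2.1 x)) fun x y ↦ by
    ext z
    exact hμ.1 x y z

theorem map_zero_left (hμ : IsLinkingForm μ) (y : G) : μ 0 y = 0 :=
  DFunLike.congr_fun (map_zero hμ.toAddMonoidHom) y

theorem eq_zero_of_forall_apply_complement_eq_zero (hμ : IsLinkingForm μ)
    {A₀ A₁ : AddSubgroup G} (hsup : A₀ ⊔ A₁ = ⊤) (hA₀ : ∀ x ∈ A₀, ∀ y ∈ A₀, μ x y = 0)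
    {s : G} (hs : s ∈ A₀) (h : ∀ y ∈ A₁, μ s y = 0) : s = 0 := by
  by_contra hne
  obtain ⟨y, hy⟩ := hμ.2.2.2 s hne
  obtain ⟨y₀, hy₀, y₁, hy₁, rfl⟩ := AddSubgroup.mem_sup.1 (hsup ▸ AddSubgroup.mem_top y)
  rw [hμ.2.1, hA₀ s hs y₀ hy₀, h y₁ hy₁, add_zero] at hy
  exact hy rfl

end IsLinkingForm

theorem stmt5_general {A B : Type*} [AddCommGroup A] [Finite A] [AddCommGroup B]
    (μ : A → A → AddCircle (1 : ℚ)) (ν : B → B → AddCircle (1 : ℚ))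
    (hμ : IsLinkingForm μ) (hν : IsLinkingForm ν)
    (A₀ A₁ : AddSubgroup A)
    (hinf : A₀ ⊓ A₁ = ⊥) (hsup : A₀ ⊔ A₁ = ⊤)
    (hA₀μ : ∀ x ∈ A₀, ∀ y ∈ A₀, μ x y = 0)
    (L : AddSubgroup (A × B))
    (hLform : ∀ u ∈ L, ∀ v ∈ L, μ u.1 v.1 + ν u.2 v.2 = 0) :
    Nat.card {u : A | u ∈ A₀ ∧ ((u, (0 : B)) : A × B) ∈ L} * Nat.card A₀ *
        Nat.card {w : A | w ∈ A₁ ∧ ∃ a₀' ∈ A₀, ∃ b : B, ((a₀' + w, b) : A × B) ∈ L} ≤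
      Nat.card A := by
  set S := A₀ ⊓ L.comap (AddMonoidHom.inl A B)
  let f : S →+ A₁ →+ AddCircle (1 : ℚ) := (hμ.toAddMonoidHom.compl₂ A₁.subtype).comp S.subtype
  have hf : Injective f := (injective_iff_map_eq_zero f).2 fun s hs ↦ Subtype.ext <|
    hμ.eq_zero_of_forall_apply_complement_eq_zero hsup hA₀μ s.2.1 fun y hy ↦
      DFunLike.congr_fun hs ⟨y, hy⟩
  have horth {s a₀ w : A} {b : B} (hs : s ∈ S) (ha₀ : a₀ ∈ A₀) (hw : (a₀ + w, b) ∈ L) :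
      μ s w = 0 := by
    have : μ s (a₀ + w) + ν 0 b = 0 := hLform _ hs.2 _ hw
    rwa [hν.map_zero_left, add_zero, hμ.2.1, hA₀μ s hs.1 a₀ ha₀, zero_add] at this
  have hW : Nat.card {w : A | w ∈ A₁ ∧ ∃ a₀' ∈ A₀, ∃ b : B, ((a₀' + w, b) : A × B) ∈ L} ≤
      Nat.card f.flip.ker := by
    refine Nat.card_le_card_of_injective (fun w ↦ ⟨⟨w, w.2.1⟩, ?_⟩) fun w w' h ↦ ?_
    · obtain ⟨-, a₀, ha₀, b, hw⟩ := w.2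
      ext s
      exact horth s.2 ha₀ hw
    · exact Subtype.ext congr($h.1.1)
  calc _ ≤ Nat.card S * Nat.card A₀ * Nat.card f.flip.ker := Nat.mul_le_mul_left _ hW
    _ = Nat.card A₀ * (Nat.card S * Nat.card f.flip.ker) := by ring
    _ ≤ Nat.card A₀ * Nat.card A₁ := by gcongr; exact card_mul_card_ker_flip_le f hf
    _ ≤ Nat.card A := AddSubgroup.card_mul_card_le_of_disjoint (disjoint_iff.2 hinf)

/-- With `A = A₀ ⊕ A₁`, `μ` vanishing on `A₀`, and `L ≤ A × B` isotropic for `μ ⊕ ν`: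
`|L ∩ (A₀ ⊕ 0)| ⬝ |A₀| ⬝ |L_{A₁}| ≤ |A|`.  Here `L_{A₁}` is the set of projections
`π₁(a)` (projection onto `A₁` along `A₀`) over all `a` appearing as the first
coordinate of an element of `L`; equivalently `L_{A₁}` consists of the `w ∈ A₁` with
`(a₀' + w, b) ∈ L` for some `a₀' ∈ A₀` and some `b ∈ B`. -/
theorem stmt5 {A B : Type*} [AddCommGroup A] [Finite A] [AddCommGroup B] [Finite B]
    (μ : A → A → AddCircle (1 : ℚ)) (ν : B → B → AddCircle (1 : ℚ))
    (hμ : IsLinkingForm μ) (hν : IsLinkingForm ν)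
    (A₀ A₁ : AddSubgroup A)
    (hinf : A₀ ⊓ A₁ = ⊥) (hsup : A₀ ⊔ A₁ = ⊤)
    (hA₀μ : ∀ x ∈ A₀, ∀ y ∈ A₀, μ x y = 0)
    (L : AddSubgroup (A × B))
    (hLform : ∀ u ∈ L, ∀ v ∈ L, μ u.1 v.1 + ν u.2 v.2 = 0) :
    Nat.card {u : A | u ∈ A₀ ∧ ((u, (0 : B)) : A × B) ∈ L} * Nat.card A₀ *
        Nat.card {w : A | w ∈ A₁ ∧ ∃ a₀' ∈ A₀, ∃ b : B, ((a₀' + w, b) : A × B) ∈ L} ≤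
      Nat.card A :=
  stmt5_general μ ν hμ hν A₀ A₁ hinf hsup hA₀μ L hLform
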